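/- Let r_2 : [0,1] → [0,1] be monotone nondecreasing and concave with r_2(1) = 1, and let m ∈ [0,1]. Then E_{y ~ U([0,1])}[r_2(y) | r_2(y) ≥ m] ≥ (1+m)/2. -/

import Mathlib

/-! By monotonicity the superlevel set `{r₂ ≥ m} ∩ [0, 1]` is, up to a null set, an interval
`(c, 1]`, so the conditional law is uniform on `(c, 1]`. There `r₂ ≥ m`, so by concavity `r₂` lies
above the chord from `(c, m)` to `(1, 1)`, whose mean over `(c, 1]` is `(1 + m) / 2`. -/

open MeasureTheory Set Filter Topology

theorem ConcaveOn.chord_le_of_le_on_Ioc {f : ℝ → ℝ} {a b m y : ℝ} (hf : ConcaveOn ℝ (Icc a b) f)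
    (hm : ∀ x ∈ Ioc a b, m ≤ f x) (hy : y ∈ Ioc a b) :
    (b - y) * m + (y - a) * f b ≤ (b - a) * f y := by
  rcases hy.2.eq_or_lt with rfl | hyb
  · linarith
  have hchord : ∀ x ∈ Ioo a y, (b - y) * m + (y - x) * f b ≤ (b - x) * f y := by
    intro x hx
    have hslope := hf.slope_anti_adjacent ⟨hx.1.le, (hx.2.trans hyb).le⟩
      ⟨hy.1.le.trans hyb.le, le_rfl⟩ hx.2 hyb
    rw [div_le_div_iff₀ (by linarith) (by linarith [hx.2])] at hslope
    nlinarith [hm x ⟨hx.1, (hx.2.trans hyb).le⟩]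
  -- `m ≤ f` is only known on `(a, b]`, so take the chord from `x > a` and let `x → a⁺`.
  have hlim : Tendsto (fun x => (b - x) * f y - ((b - y) * m + (y - x) * f b)) (𝓝[>] a)
      (𝓝 ((b - a) * f y - ((b - y) * m + (y - a) * f b))) :=
    (Continuous.tendsto (by fun_prop) a).mono_left nhdsWithin_le_nhds
  have := ge_of_tendsto hlim (eventually_of_mem (Ioo_mem_nhdsGT hy.1)
    fun x hx => sub_nonneg.2 (hchord x hx))
  linarith

theorem ConcaveOn.trapezoid_le_intervalIntegral {f : ℝ → ℝ} {a b m : ℝ}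
    (hf : ConcaveOn ℝ (Icc a b) f) (hint : IntervalIntegrable f volume a b)
    (hm : ∀ x ∈ Ioc a b, m ≤ f x) (hab : a < b) :
    (b - a) * (m + f b) / 2 ≤ ∫ x in a..b, f x := by
  have hchord : ∫ x in a..b, ((b - x) * m + (x - a) * f b) = (b - a) ^ 2 * (m + f b) / 2 := by
    rw [intervalIntegral.integral_add
      ((by fun_prop : Continuous fun x => (b - x) * m).intervalIntegrable _ _)
      ((by fun_prop : Continuous fun x => (x - a) * f b).intervalIntegrable _ _)]
    simp [intervalIntegral.integral_comp_sub_left (fun x => x)]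
    ring
  have hmono : ∫ x in a..b, ((b - x) * m + (x - a) * f b) ≤ ∫ x in a..b, (b - a) * f x :=
    intervalIntegral.integral_mono_on_of_le_Ioo hab.le
      ((by fun_prop : Continuous fun x => (b - x) * m + (x - a) * f b).intervalIntegrable _ _)
      (hint.const_mul _) fun x hx => hf.chord_le_of_le_on_Ioc hm ⟨hx.1, hx.2.le⟩
  rw [hchord, intervalIntegral.integral_const_mul] at hmono
  nlinarith

theorem MonotoneOn.exists_superlevelSet_inter_Icc_ae_eq_Ioc {f : ℝ → ℝ} {a b m : ℝ}
    (hf : MonotoneOn f (Icc a b)) (hab : a ≤ b) (hb : m ≤ f b) :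
    ∃ c ∈ Icc a b, ({y | m ≤ f y} ∩ Icc a b : Set ℝ) =ᵐ[volume] Ioc c b ∧
      ∀ y ∈ Ioc c b, m ≤ f y := by
  set T := {y | m ≤ f y} ∩ Icc a b
  have hbT : b ∈ T := ⟨hb, hab, le_rfl⟩
  have hbdd : BddBelow T := ⟨a, fun y hy => hy.2.1⟩
  have hc : sInf T ∈ Icc a b := ⟨le_csInf ⟨b, hbT⟩ fun y hy => hy.2.1, csInf_le hbdd hbT⟩
  have hIoc : Ioc (sInf T) b ⊆ T := by
    rintro z ⟨hcz, hzb⟩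
    obtain ⟨y, hyT, hyz⟩ := exists_lt_of_csInf_lt ⟨b, hbT⟩ hcz
    have hz : z ∈ Icc a b := ⟨hyT.2.1.trans hyz.le, hzb⟩
    exact ⟨hyT.1.trans (hf hyT.2 hz hyz.le), hz⟩
  have hIcc : T ⊆ Icc (sInf T) b := fun y hy => ⟨csInf_le hbdd hy, hy.2.2⟩
  refine ⟨sInf T, hc, ?_, fun y hy => (hIoc hy).1⟩
  exact (hIcc.eventuallyLE.trans Ioc_ae_eq_Icc.symm.le).antisymm hIoc.eventuallyLE

theorem cond_exp_ge_general (r₂ : ℝ → ℝ)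
    (hmono : MonotoneOn r₂ (Set.Icc (0:ℝ) 1))
    (hconc : ConcaveOn ℝ (Set.Icc (0:ℝ) 1) r₂)
    (hr1 : r₂ 1 = 1)
    (m : ℝ) (hm : m ∈ Set.Icc (0:ℝ) 1)
    (μ : Measure ℝ) (hμ : μ = volume.restrict (Set.Icc (0:ℝ) 1))
    (hpos : μ {y | m ≤ r₂ y} ≠ 0) :
    (∫ y, r₂ y ∂(ProbabilityTheory.cond μ {y | m ≤ r₂ y})) ≥ (1 + m)/2 := by
  obtain ⟨c, hc, hae, hsuper⟩ :=
    hmono.exists_superlevelSet_inter_Icc_ae_eq_Ioc zero_le_one (hr1 ▸ hm.2)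
  have hrestrict : μ.restrict {y | m ≤ r₂ y} = volume.restrict (Ioc c 1) := by
    rw [hμ, Measure.restrict_restrict' measurableSet_Icc, Measure.restrict_congr_set hae]
  have hmeasure : μ {y | m ≤ r₂ y} = ENNReal.ofReal (1 - c) := by
    rw [← Measure.restrict_apply_univ, hrestrict, Measure.restrict_apply_univ, Real.volume_Ioc]
  have hc1 : c < 1 := by
    by_contra! h
    exact hpos (hmeasure ▸ ENNReal.ofReal_eq_zero.2 (by linarith))
  have hsub : Icc c 1 ⊆ Icc 0 1 := Icc_subset_Icc hc.1 le_rfl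
  have hint : IntervalIntegrable r₂ volume c 1 :=
    (intervalIntegrable_iff_integrableOn_Icc_of_le hc1.le).2
      ((hmono.integrableOn_isCompact isCompact_Icc).mono_set hsub)
  have htrapezoid := (hconc.subset hsub (convex_Icc c 1)).trapezoid_le_intervalIntegral
    hint hsuper hc1
  rw [hr1] at htrapezoid
  rw [ProbabilityTheory.cond, hrestrict, hmeasure, integral_smul_measure,
    ← intervalIntegral.integral_of_le hc1.le, ENNReal.toReal_inv,
    ENNReal.toReal_ofReal (by linarith), smul_eq_mul, ge_iff_le, le_inv_mul_iff₀ (by linarith)]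
  linarith

/-- conditional expectation of a monotone concave r₂ with r₂(1)=1,
given {r₂(y) ≥ m}, is at least (1+m)/2. -/
theorem cond_exp_ge (r₂ : ℝ → ℝ)
    (hmono : MonotoneOn r₂ (Set.Icc (0:ℝ) 1))
    (hconc : ConcaveOn ℝ (Set.Icc (0:ℝ) 1) r₂)
    (hrange : ∀ x ∈ Set.Icc (0:ℝ) 1, r₂ x ∈ Set.Icc (0:ℝ) 1)
    (hr1 : r₂ 1 = 1)
    (m : ℝ) (hm : m ∈ Set.Icc (0:ℝ) 1)
    (μ : Measure ℝ) (hμ : μ = volume.restrict (Set.Icc (0:ℝ) 1))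
    (hpos : μ {y | m ≤ r₂ y} ≠ 0) :
    (∫ y, r₂ y ∂(ProbabilityTheory.cond μ {y | m ≤ r₂ y})) ≥ (1 + m)/2 :=
  cond_exp_ge_general r₂ hmono hconc hr1 m hm μ hμ hpos
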